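/- For an ideal I of C(X), the space C(X) with the U^I-topology is nowhere locally compact if and only if X \ ⋂Z[I] is an infinite set. -/

import Mathlib

open Filter TopologicalSpace
open scoped ENNReal NNReal Topology

variable {X : Type*}

/-- The (possibly infinite) sup-distance between two continuous functions. -/
noncomputable def supDist [TopologicalSpace X] (f g : C(X, ℝ)) : ℝ≥0∞ :=
  ⨆ x, (‖f x - g x‖₊ : ℝ≥0∞)

/-- Basic set for the `U^I`-topology. -/
def UIball [TopologicalSpace X] (I : Ideal C(X, ℝ)) (f : C(X, ℝ)) (ε : ℝ) :
    Set C(X, ℝ) :=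
  {g | supDist f g < ENNReal.ofReal ε ∧ f - g ∈ I}

/-- The `U^I`-topology on `C(X, ℝ)`. -/
def UItop [TopologicalSpace X] (I : Ideal C(X, ℝ)) : TopologicalSpace C(X, ℝ) :=
  generateFrom {S | ∃ f ε, 0 < ε ∧ S = UIball I f ε}

/-- Basic set for the `m^I`-topology. -/
def mIball [TopologicalSpace X] (I : Ideal C(X, ℝ)) (f u : C(X, ℝ)) :
    Set C(X, ℝ) :=
  {g | (∀ x, |f x - g x| < u x) ∧ f - g ∈ I}

/-- The `m^I`-topology on `C(X, ℝ)`. -/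
def mItop [TopologicalSpace X] (I : Ideal C(X, ℝ)) : TopologicalSpace C(X, ℝ) :=
  generateFrom {S | ∃ f u, (∀ x, 0 < u x) ∧ S = mIball I f u}

/-- The topology of uniform convergence (`U`-topology) on `C(X, ℝ)`. -/
def Utop [TopologicalSpace X] : TopologicalSpace C(X, ℝ) :=
  generateFrom {S | ∃ (f : C(X, ℝ)) (ε : ℝ), 0 < ε ∧
    S = {g | supDist f g < ENNReal.ofReal ε}}

/-- The `m`-topology on `C(X, ℝ)`. -/
def mtop [TopologicalSpace X] : TopologicalSpace C(X, ℝ) :=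
  generateFrom {S | ∃ (f u : C(X, ℝ)), (∀ x, 0 < u x) ∧
    S = {g | ∀ x, |f x - g x| < u x}}

/-- The bounded continuous functions `C*(X)` as a subset of `C(X, ℝ)`. -/
def Cstar [TopologicalSpace X] : Set C(X, ℝ) :=
  {f | ∃ M : ℝ, ∀ x, |f x| ≤ M}

section lemmas
variable [TopologicalSpace X] (I : Ideal C(X, ℝ))

lemma supDist_comm (f g : C(X, ℝ)) : supDist f g = supDist g f := by
  unfold supDist
  congr 1; ext x; rw [← nnnorm_neg]; ring_nf

lemma supDist_triangle (f g h : C(X, ℝ)) :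
    supDist f h ≤ supDist f g + supDist g h := by
  refine iSup_le fun x => ?_
  calc (‖f x - h x‖₊ : ℝ≥0∞) ≤ (‖f x - g x‖₊ : ℝ≥0∞) + ‖g x - h x‖₊ := by
        simp only [← enorm_eq_nnnorm, ← edist_eq_enorm_sub]
        exact edist_triangle _ _ _
    _ ≤ supDist f g + supDist g h :=
        add_le_add (le_iSup (fun x => ((‖f x - g x‖₊ : ℝ≥0∞))) x)
          (le_iSup (fun x => ((‖g x - h x‖₊ : ℝ≥0∞))) x)

lemma self_mem_UIball (f : C(X, ℝ)) {ε : ℝ} (hε : 0 < ε) : f ∈ UIball I f ε := by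
  constructor
  · have : supDist f f = 0 := by
      unfold supDist; simp
    rw [this]; exact ENNReal.ofReal_pos.2 hε
  · simp

lemma UIball_shrink {h f : C(X, ℝ)} {ε : ℝ} (hf : f ∈ UIball I h ε) :
    ∃ δ, 0 < δ ∧ UIball I f δ ⊆ UIball I h ε := by
  obtain ⟨hd, hi⟩ := hf
  have hne : supDist h f ≠ ⊤ := hd.ne_top
  set d : ℝ := (supDist h f).toReal with hdd
  have hd0 : 0 ≤ d := ENNReal.toReal_nonneg
  have hdlt : d < ε := by
    have := hd
    rw [← ENNReal.ofReal_toReal hne] at this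
    exact (ENNReal.ofReal_lt_ofReal_iff_of_nonneg hd0).1 this
  refine ⟨ε - d, by linarith, fun g hg => ?_⟩
  obtain ⟨hgd, hgi⟩ := hg
  constructor
  · calc supDist h g ≤ supDist h f + supDist f g := supDist_triangle _ _ _
      _ < supDist h f + ENNReal.ofReal (ε - d) := by
          exact ENNReal.add_lt_add_left hne hgd
      _ ≤ ENNReal.ofReal d + ENNReal.ofReal (ε - d) := by
          gcongr
          rw [hdd, ENNReal.ofReal_toReal hne]
      _ = ENNReal.ofReal ε := by
          rw [← ENNReal.ofReal_add hd0 (by linarith)]; ring_nf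
  · have : h - g = (h - f) + (f - g) := by ring
    rw [this]; exact I.add_mem hi hgi

lemma UItop_basis :
    @IsTopologicalBasis C(X, ℝ) (UItop I) {S | ∃ f ε, 0 < ε ∧ S = UIball I f ε} := by
  letI := UItop I
  refine ⟨?_, ?_, rfl⟩
  · rintro t₁ ⟨f₁, ε₁, hε₁, rfl⟩ t₂ ⟨f₂, ε₂, hε₂, rfl⟩ x ⟨hx₁, hx₂⟩
    obtain ⟨δ₁, hδ₁, hs₁⟩ := UIball_shrink I hx₁
    obtain ⟨δ₂, hδ₂, hs₂⟩ := UIball_shrink I hx₂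
    refine ⟨UIball I x (min δ₁ δ₂), ⟨x, min δ₁ δ₂, lt_min hδ₁ hδ₂, rfl⟩,
      self_mem_UIball I x (lt_min hδ₁ hδ₂), ?_⟩
    intro g hg
    have h1 : g ∈ UIball I x δ₁ := ⟨hg.1.trans_le (by gcongr; exact min_le_left _ _), hg.2⟩
    have h2 : g ∈ UIball I x δ₂ := ⟨hg.1.trans_le (by gcongr; exact min_le_right _ _), hg.2⟩
    exact ⟨hs₁ h1, hs₂ h2⟩
  · refine Set.eq_univ_of_forall fun f => ⟨UIball I f 1, ⟨f, 1, one_pos, rfl⟩, self_mem_UIball I f one_pos⟩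

lemma mem_UInhds_iff {f : C(X, ℝ)} {K : Set C(X, ℝ)} :
    K ∈ @nhds C(X, ℝ) (UItop I) f ↔ ∃ ε, 0 < ε ∧ UIball I f ε ⊆ K := by
  letI := UItop I
  rw [(UItop_basis I).mem_nhds_iff]
  constructor
  · rintro ⟨t, ⟨h, ε, hε, rfl⟩, hft, htK⟩
    obtain ⟨δ, hδ, hs⟩ := UIball_shrink I hft
    exact ⟨δ, hδ, hs.trans htK⟩
  · rintro ⟨ε, hε, hs⟩
    exact ⟨UIball I f ε, ⟨f, ε, hε, rfl⟩, self_mem_UIball I f hε, hs⟩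

end lemmas

lemma exists_compact_nhds [TopologicalSpace X] [T2Space X] (I : Ideal C(X, ℝ))
    (hS : {x : X | ∃ g ∈ I, g x ≠ 0}.Finite) :
    ∃ (f : C(X, ℝ)) (K : Set C(X, ℝ)),
      K ∈ @nhds C(X, ℝ) (UItop I) f ∧ @IsCompact C(X, ℝ) (UItop I) K := by
  classical
  letI := UItop I
  set S := {x : X | ∃ g ∈ I, g x ≠ 0} with hSdef
  set S' := {x : X | x ∈ S ∧ IsOpen ({x} : Set X)} with hS'def
  have hS'fin : S'.Finite := hS.subset fun x hx => hx.1
  -- every element of the ideal vanishes off S'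
  have hvan : ∀ g ∈ I, ∀ y, y ∉ S' → (g : C(X, ℝ)) y = 0 := by
    intro g hg y hy
    by_cases hyS : y ∈ S
    · have hno : ¬ IsOpen ({y} : Set X) := fun h => hy ⟨hyS, h⟩
      have hyc : y ∈ closure ({y}ᶜ : Set X) := by
        by_contra hcc
        apply hno
        have h1 : (closure ({y}ᶜ : Set X))ᶜ ⊆ {y} := by
          intro z hz
          by_contra hzz
          exact hz (subset_closure (by simpa using hzz))
        have h2 : ({y} : Set X) ⊆ (closure ({y}ᶜ : Set X))ᶜ := by
          intro z hz
          rw [Set.mem_singleton_iff] at hz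
          subst hz; exact hcc
        rw [← h1.antisymm h2]
        exact isClosed_closure.isOpen_compl
      have hsplit : ({y}ᶜ : Set X) = Sᶜ ∪ (S \ {y}) := by
        ext z
        simp only [Set.mem_compl_iff, Set.mem_singleton_iff, Set.mem_union, Set.mem_diff]
        constructor
        · intro hz
          by_cases hzS : z ∈ S
          · exact Or.inr ⟨hzS, hz⟩
          · exact Or.inl hzS
        · rintro (hz | ⟨_, hz⟩)
          · rintro rfl; exact hz hyS
          · exact hz
      have hycl : y ∈ closure (Sᶜ : Set X) := by
        rw [hsplit, closure_union, ((hS.subset Set.diff_subset).isClosed).closure_eq] at hyc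
        rcases hyc with h | h
        · exact h
        · exact absurd h.2 (not_not.2 rfl)
      have hcl : closure (Sᶜ : Set X) ⊆ {z | g z = 0} := by
        refine closure_minimal ?_ (isClosed_singleton.preimage g.continuous)
        intro z hz
        by_contra hne
        exact hz ⟨g, hg, hne⟩
      exact hcl hycl
    · by_contra hne
      exact hyS ⟨g, hg, hne⟩
  -- indicator functions of isolated points of S are in I
  have hind : ∀ x ∈ S', ∃ e : C(X, ℝ), e ∈ I ∧ ∀ y, e y = if y = x then 1 else 0 := by
    rintro x ⟨⟨g, hg, hgx⟩, hopen⟩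
    have hcont : Continuous fun y : X => if y = x then (g x)⁻¹ else 0 := by
      apply IsLocallyConstant.continuous
      intro s
      by_cases h1 : (g x)⁻¹ ∈ s <;> by_cases h2 : (0 : ℝ) ∈ s
      · have : (fun y : X => if y = x then (g x)⁻¹ else 0) ⁻¹' s = Set.univ := by
          ext z; by_cases hz : z = x <;> simp [hz, h1, h2]
        rw [this]; exact isOpen_univ
      · have : (fun y : X => if y = x then (g x)⁻¹ else 0) ⁻¹' s = {x} := by
          ext z; by_cases hz : z = x <;> simp [hz, h1, h2]
        rw [this]; exact hopen
      · have : (fun y : X => if y = x then (g x)⁻¹ else 0) ⁻¹' s = {x}ᶜ := by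
          ext z; by_cases hz : z = x <;> simp [hz, h1, h2]
        rw [this]; exact isClosed_singleton.isOpen_compl
      · have : (fun y : X => if y = x then (g x)⁻¹ else 0) ⁻¹' s = ∅ := by
          ext z; by_cases hz : z = x <;> simp [hz, h1, h2]
        rw [this]; exact isOpen_empty
    refine ⟨(⟨_, hcont⟩ : C(X, ℝ)) * g, I.mul_mem_left _ hg, fun y => ?_⟩
    by_cases hy : y = x
    · subst hy; simp [ContinuousMap.mul_apply, inv_mul_cancel₀ hgx]
    · simp [ContinuousMap.mul_apply, hy]
  -- functions vanishing off S' are in I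
  have hmemI : ∀ k : C(X, ℝ), (∀ y, y ∉ S' → k y = 0) → k ∈ I := by
    intro k hk
    choose! e he hev using hind
    have hkeq : k = ∑ x ∈ hS'fin.toFinset, ContinuousMap.const X (k x) * e x := by
      ext y
      rw [ContinuousMap.coe_sum]
      simp only [Finset.sum_apply, ContinuousMap.mul_apply, ContinuousMap.const_apply]
      by_cases hy : y ∈ S'
      · rw [Finset.sum_eq_single y]
        · rw [hev y hy]; simp
        · intro b hb hby
          rw [hev b (hS'fin.mem_toFinset.1 hb), if_neg (fun h => hby h.symm), mul_zero]
        · intro hy'; exact absurd (hS'fin.mem_toFinset.2 hy) hy'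
      · rw [hk y hy]
        refine (Finset.sum_eq_zero fun b hb => ?_).symm
        rw [hev b (hS'fin.mem_toFinset.1 hb)]
        have : y ≠ b := fun h => hy (h ▸ hS'fin.mem_toFinset.1 hb)
        simp [this]
    rw [hkeq]
    exact Ideal.sum_mem I fun x hx => I.mul_mem_left _ (he x (hS'fin.mem_toFinset.1 hx))
  -- the compact neighborhood
  set K : Set C(X, ℝ) := {g | (∀ y, |g y| ≤ 1) ∧ ∀ y, y ∉ S' → g y = 0} with hKdef
  have hKI : ∀ g ∈ K, g ∈ I := fun g hg => hmemI g hg.2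
  refine ⟨0, K, ?_, ?_⟩
  · rw [mem_UInhds_iff I]
    refine ⟨1, one_pos, fun g hg => ?_⟩
    obtain ⟨hd, hi⟩ := hg
    have hgI : g ∈ I := by
      have := I.neg_mem hi
      simpa using this
    refine ⟨fun y => ?_, fun y hy => hvan g hgI y hy⟩
    have h1 : (‖(0 : C(X, ℝ)) y - g y‖₊ : ℝ≥0∞) < ENNReal.ofReal 1 :=
      lt_of_le_of_lt (le_iSup (fun x => (‖(0 : C(X, ℝ)) x - g x‖₊ : ℝ≥0∞)) y) hd
    rw [← enorm_eq_nnnorm, ← ofReal_norm, ENNReal.ofReal_lt_ofReal_iff one_pos] at h1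
    have : ‖(0 : ℝ) - g y‖ < 1 := by simpa using h1
    rw [zero_sub, norm_neg, Real.norm_eq_abs] at this
    exact this.le
  · rw [isCompact_iff_ultrafilter_le_nhds]
    intro F hF
    have hKF : K ∈ F := Filter.le_principal_iff.1 hF
    have hev2 : ∀ y : X, ∃ a ∈ Set.Icc (-1 : ℝ) 1,
        ↑(F.map fun g : C(X, ℝ) => g y) ≤ 𝓝 a := by
      intro y
      apply isCompact_Icc.ultrafilter_le_nhds
      rw [Ultrafilter.coe_map, Filter.le_principal_iff, Filter.mem_map]
      filter_upwards [hKF] with g hg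
      have := hg.1 y
      rw [abs_le] at this
      exact this
    choose a ha hta using hev2
    have ha0 : ∀ y, y ∉ S' → a y = 0 := by
      intro y hy
      have h0 : {(0 : ℝ)} ∈ F.map fun g : C(X, ℝ) => g y := by
        rw [Ultrafilter.mem_map]
        filter_upwards [hKF] with g hg
        simp [hg.2 y hy]
      have hcp : ClusterPt (a y) (Filter.principal {(0 : ℝ)}) := by
        refine Filter.neBot_of_le (f := ↑(F.map fun g : C(X, ℝ) => g y)) ?_
        exact le_inf (hta y) (Filter.le_principal_iff.2 h0)
      have := mem_closure_iff_clusterPt.2 hcp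
      simpa using this
    have hcont : Continuous a := by
      rw [continuous_iff_continuousAt]
      intro y
      by_cases hy : y ∈ S'
      · have hev' : ∀ᶠ z in 𝓝 y, a y = a z := by
          filter_upwards [hy.2.mem_nhds rfl] with z hz
          rw [Set.mem_singleton_iff] at hz
          rw [hz]
        exact continuousAt_const.congr hev'
      · have hU : IsOpen (S'ᶜ : Set X) := hS'fin.isClosed.isOpen_compl
        have hev' : ∀ᶠ z in 𝓝 y, a y = a z := by
          filter_upwards [hU.mem_nhds hy] with z hz
          rw [ha0 z hz, ha0 y hy]
        exact continuousAt_const.congr hev'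
    set g₀ : C(X, ℝ) := ⟨a, hcont⟩ with hg₀
    have hg₀K : g₀ ∈ K := ⟨fun y => abs_le.2 ⟨(ha y).1, (ha y).2⟩, ha0⟩
    refine ⟨g₀, hg₀K, fun s hs => ?_⟩
    obtain ⟨ε, hε, hsub⟩ := (mem_UInhds_iff I).1 hs
    refine Filter.mem_of_superset ?_ hsub
    have hA : ∀ x ∈ hS'fin.toFinset, {g : C(X, ℝ) | |a x - g x| < ε / 2} ∈ F := by
      intro x _
      have hb : Metric.ball (a x) (ε / 2) ∈ 𝓝 (a x) := Metric.ball_mem_nhds _ (by linarith)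
      have hmem : (fun g : C(X, ℝ) => g x) ⁻¹' Metric.ball (a x) (ε / 2) ∈ F := hta x hb
      refine Filter.mem_of_superset hmem fun g hg => ?_
      rw [Set.mem_preimage, Metric.mem_ball, Real.dist_eq] at hg
      rw [Set.mem_setOf_eq, abs_sub_comm]
      exact hg
    have hbig : (K ∩ ⋂ x ∈ hS'fin.toFinset, {g : C(X, ℝ) | |a x - g x| < ε / 2}) ∈ F :=
      Filter.inter_mem hKF ((Filter.biInter_finset_mem _).2 hA)
    refine Filter.mem_of_superset hbig ?_
    rintro g ⟨hgK, hgnear⟩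
    rw [Set.mem_iInter₂] at hgnear
    constructor
    · have hbound : ∀ y, (‖g₀ y - g y‖₊ : ℝ≥0∞) ≤ ENNReal.ofReal (ε / 2) := by
        intro y
        by_cases hy : y ∈ S'
        · have h1 : |a y - g y| < ε / 2 := hgnear y (hS'fin.mem_toFinset.2 hy)
          rw [← enorm_eq_nnnorm, ← ofReal_norm]
          refine ENNReal.ofReal_le_ofReal ?_
          rw [Real.norm_eq_abs]
          exact h1.le
        · have hz : g₀ y - g y = 0 := by
            show a y - g y = 0
            rw [ha0 y hy, hgK.2 y hy, sub_zero]
          rw [hz]; simp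
      calc supDist g₀ g ≤ ENNReal.ofReal (ε / 2) := iSup_le hbound
        _ < ENNReal.ofReal ε := (ENNReal.ofReal_lt_ofReal_iff hε).2 (by linarith)
    · exact I.sub_mem (hKI g₀ hg₀K) (hKI g hgK)

lemma no_compact_nhds [TopologicalSpace X] [T2Space X] [CompletelyRegularSpace X]
    (I : Ideal C(X, ℝ)) (hS : {x : X | ∃ g ∈ I, g x ≠ 0}.Infinite) :
    ∀ (f : C(X, ℝ)) (K : Set C(X, ℝ)),
      K ∈ @nhds C(X, ℝ) (UItop I) f → ¬ @IsCompact C(X, ℝ) (UItop I) K := by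
  classical
  letI := UItop I
  intro f K hK hcomp
  obtain ⟨δ, hδ, hsub⟩ := (mem_UInhds_iff I).1 hK
  set emb := hS.natEmbedding with hemb
  set x : ℕ → X := fun n => (emb n : X) with hx
  have hxinj : Function.Injective x := fun n m h => emb.injective (Subtype.ext h)
  have hxS : ∀ n, ∃ g ∈ I, g (x n) ≠ 0 := fun n => (emb n).2
  -- construct the separated family
  have hkex : ∀ n : ℕ, ∃ k : C(X, ℝ), k ∈ I ∧ (∀ y, 0 ≤ k y ∧ k y ≤ δ / 2) ∧
      k (x n) = δ / 2 ∧ ∀ m, m < n → k (x m) = 0 := by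
    intro n
    obtain ⟨g, hgI, hgx⟩ := hxS n
    set c : ℝ := g (x n) with hc
    have hc2 : (0 : ℝ) < c ^ 2 := by positivity
    have hden : ∀ y, (0 : ℝ) < max ((g y) ^ 2) (c ^ 2) := fun y => lt_max_of_lt_right hc2
    have hψcont : Continuous fun y : X => δ / 2 * g y / max ((g y) ^ 2) (c ^ 2) :=
      (continuous_const.mul (map_continuous g)).div
        (((map_continuous g).pow 2).max continuous_const) fun y => (hden y).ne'
    set ψ : C(X, ℝ) := ⟨_, hψcont⟩ with hψ
    set h : C(X, ℝ) := g * ψ with hh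
    have hhval : ∀ y, h y = δ / 2 * (g y) ^ 2 / max ((g y) ^ 2) (c ^ 2) := by
      intro y
      show g y * (δ / 2 * g y / max ((g y) ^ 2) (c ^ 2)) = _
      ring
    have hh0 : ∀ y, 0 ≤ h y := by
      intro y; rw [hhval]; positivity
    have hh1 : ∀ y, h y ≤ δ / 2 := by
      intro y
      rw [hhval, div_le_iff₀ (hden y)]
      calc δ / 2 * g y ^ 2 ≤ δ / 2 * max ((g y) ^ 2) (c ^ 2) := by
            apply mul_le_mul_of_nonneg_left (le_max_left _ _) (by linarith)
        _ = δ / 2 * max ((g y) ^ 2) (c ^ 2) := rfl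
    have hhxn : h (x n) = δ / 2 := by
      rw [hhval, ← hc, max_self]
      field_simp
    -- bump function
    set FS : Finset X := (Finset.range n).image x with hFS
    have hclosed : IsClosed (FS : Set X) := (FS : Set X).toFinite.isClosed
    have hxn : x n ∉ (FS : Set X) := by
      simp only [hFS, Finset.coe_image, Set.mem_image, Finset.coe_range, Set.mem_Iio]
      rintro ⟨m, hm, hmeq⟩
      exact absurd (hxinj hmeq) (by omega)
    obtain ⟨v, hvcont, hv0, hv1⟩ :=
      CompletelyRegularSpace.completely_regular (x n) (FS : Set X) hclosed hxn
    set u : C(X, ℝ) := ⟨fun y => 1 - (v y : ℝ), by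
      exact continuous_const.sub (continuous_subtype_val.comp hvcont)⟩ with hu
    have hu01 : ∀ y, 0 ≤ u y ∧ u y ≤ 1 := by
      intro y
      have := (v y).2
      simp only [Set.mem_Icc] at this
      constructor
      · show 0 ≤ 1 - (v y : ℝ); linarith [this.2]
      · show 1 - (v y : ℝ) ≤ 1; linarith [this.1]
    have huxn : u (x n) = 1 := by
      show 1 - (v (x n) : ℝ) = 1
      rw [hv0]; norm_num
    have huxm : ∀ m, m < n → u (x m) = 0 := by
      intro m hm
      have hmem : x m ∈ (FS : Set X) := by
        simp only [hFS, Finset.coe_image, Set.mem_image, Finset.coe_range, Set.mem_Iio]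
        exact ⟨m, hm, rfl⟩
      show 1 - (v (x m) : ℝ) = 0
      rw [hv1 hmem]; norm_num
    refine ⟨h * u, I.mul_mem_right _ (I.mul_mem_right _ hgI), fun y => ?_, ?_, fun m hm => ?_⟩
    · constructor
      · exact mul_nonneg (hh0 y) (hu01 y).1
      · calc h y * u y ≤ (δ / 2) * 1 :=
            mul_le_mul (hh1 y) (hu01 y).2 (hu01 y).1 (by linarith)
          _ = δ / 2 := mul_one _
    · show h (x n) * u (x n) = δ / 2
      rw [hhxn, huxn, mul_one]
    · show h (x m) * u (x m) = 0
      rw [huxm m hm, mul_zero]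
  choose k hkI hkb hkx hkm using hkex
  set p : ℕ → C(X, ℝ) := fun n => f + k n with hp
  have hpK : ∀ n, p n ∈ K := by
    intro n
    apply hsub
    constructor
    · have hb : ∀ y, (‖f y - p n y‖₊ : ℝ≥0∞) ≤ ENNReal.ofReal (δ / 2) := by
        intro y
        have : f y - p n y = -(k n y) := by
          show f y - (f y + k n y) = -(k n y); ring
        rw [this, ← enorm_eq_nnnorm, ← ofReal_norm, norm_neg, Real.norm_eq_abs,
          abs_of_nonneg (hkb n y).1]
        exact ENNReal.ofReal_le_ofReal (hkb n y).2
      calc supDist f (p n) ≤ ENNReal.ofReal (δ / 2) := iSup_le hb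
        _ < ENNReal.ofReal δ := (ENNReal.ofReal_lt_ofReal_iff hδ).2 (by linarith)
    · have : f - p n = -(k n) := by ext y; show f y - (f y + k n y) = -(k n y); ring
      rw [this]
      exact I.neg_mem (hkI n)
  have hsep : ∀ m n, m < n → (‖p n (x m) - p m (x m)‖₊ : ℝ≥0∞) = ENNReal.ofReal (δ / 2) := by
    intro m n hmn
    have : p n (x m) - p m (x m) = -(δ / 2) := by
      show (f (x m) + k n (x m)) - (f (x m) + k m (x m)) = -(δ / 2)
      rw [hkm n m hmn, hkx m]; ring
    rw [this, ← enorm_eq_nnnorm, ← ofReal_norm, norm_neg, Real.norm_eq_abs,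
      abs_of_pos (by linarith : (0:ℝ) < δ / 2)]
  -- the cluster point argument
  set F : Filter C(X, ℝ) := Filter.map p Filter.cofinite with hF
  haveI : F.NeBot := Filter.NeBot.map Filter.cofinite_neBot p
  have hle : F ≤ 𝓟 K := by
    rw [Filter.le_principal_iff, hF, Filter.mem_map]
    exact Filter.univ_mem' hpK
  obtain ⟨c, hcK, hclus⟩ := hcomp.exists_clusterPt hle
  have hU : UIball I c (δ / 4) ∈ 𝓝 c :=
    (mem_UInhds_iff I).2 ⟨δ / 4, by linarith, subset_rfl⟩
  -- at most one p n in the small ball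
  have hsing : ∀ n m, p n ∈ UIball I c (δ / 4) → p m ∈ UIball I c (δ / 4) → n = m := by
    have key : ∀ n m, m < n → p n ∈ UIball I c (δ / 4) → p m ∈ UIball I c (δ / 4) → False := by
      intro n m hmn hn hm
      have h1 : supDist (p n) (p m) ≤ supDist (p n) c + supDist c (p m) :=
        supDist_triangle _ _ _
      have h2 : supDist (p n) c < ENNReal.ofReal (δ / 4) := by
        rw [supDist_comm]; exact hn.1
      have h3 : supDist c (p m) < ENNReal.ofReal (δ / 4) := hm.1
      have h4 : supDist (p n) (p m) < ENNReal.ofReal (δ / 2) := by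
        calc supDist (p n) (p m) ≤ supDist (p n) c + supDist c (p m) := h1
          _ < ENNReal.ofReal (δ / 4) + ENNReal.ofReal (δ / 4) :=
              ENNReal.add_lt_add h2 h3
          _ = ENNReal.ofReal (δ / 2) := by
              rw [← ENNReal.ofReal_add (by linarith) (by linarith)]; ring_nf
      have h5 : ENNReal.ofReal (δ / 2) ≤ supDist (p n) (p m) := by
        rw [← hsep m n hmn]
        exact le_iSup (fun y => (‖p n y - p m y‖₊ : ℝ≥0∞)) (x m)
      exact absurd (h5.trans_lt h4) (lt_irrefl _)
    intro n m hn hm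
    rcases lt_trichotomy n m with h | h | h
    · exact absurd (key m n h hm hn) not_false
    · exact h
    · exact absurd (key n m h hn hm) not_false
  set T : Set ℕ := {n | p n ∈ UIball I c (δ / 4)} with hT
  have hTsub : T.Subsingleton := fun n hn m hm => hsing n m hn hm
  have hV : p '' Tᶜ ∈ F := by
    rw [hF, Filter.mem_map]
    apply Filter.mem_of_superset ((Filter.mem_cofinite).2 (by rw [compl_compl]; exact hTsub.finite))
    exact fun n hn => Set.mem_image_of_mem p hn
  have hne : (UIball I c (δ / 4) ∩ p '' Tᶜ).Nonempty := by
    have : UIball I c (δ / 4) ∩ p '' Tᶜ ∈ 𝓝 c ⊓ F := Filter.inter_mem_inf hU hV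
    exact hclus.nonempty_of_mem this
  obtain ⟨q, hq1, m, hm, rfl⟩ := hne
  exact hm hq1

theorem stmt10 [TopologicalSpace X] [T2Space X] [CompletelyRegularSpace X]
    (I : Ideal C(X, ℝ)) :
    (∀ (f : C(X, ℝ)) (K : Set C(X, ℝ)),
        K ∈ @nhds C(X, ℝ) (UItop I) f → ¬ @IsCompact C(X, ℝ) (UItop I) K) ↔
      {x : X | ∃ g ∈ I, g x ≠ 0}.Infinite := by
  constructor
  · intro h
    by_contra hfin
    rw [Set.not_infinite] at hfin
    obtain ⟨f, K, hK, hc⟩ := exists_compact_nhds I hfin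
    exact h f K hK hc
  · exact no_compact_nhds I
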